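/- arXiv:2203.09045 — 2 statements merged into one kernel-verified Lean document; each statement's English description precedes it below -/
import Mathlib

section
/- A zero set Z in a Tychonoff space X is hard in X if and only if Z is not a member of any z-filter on X that is not an hz-filter. -/
open Set Topology

variable {X : Type*}

def IsZeroSet [TopologicalSpace X] (Z : Set X) : Prop :=
  ∃ f : X → ℝ, Continuous f ∧ Z = {x | f x = 0}

def IsZFilter [TopologicalSpace X] (F : Set (Set X)) : Prop :=
  (∀ Z ∈ F, IsZeroSet Z) ∧ (∅ : Set X) ∉ F ∧ Set.univ ∈ F ∧
  (∀ Z₁ ∈ F, ∀ Z₂ ∈ F, Z₁ ∩ Z₂ ∈ F) ∧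
  (∀ Z₁ ∈ F, ∀ Z₂ : Set X, IsZeroSet Z₂ → Z₁ ⊆ Z₂ → Z₂ ∈ F)

def IsZUltrafilter [TopologicalSpace X] (F : Set (Set X)) : Prop :=
  IsZFilter F ∧ ∀ G : Set (Set X), IsZFilter G → F ⊆ G → G = F

def IsPrimeZFilter [TopologicalSpace X] (F : Set (Set X)) : Prop :=
  IsZFilter F ∧ ∀ Z₁ Z₂ : Set X, IsZeroSet Z₁ → IsZeroSet Z₂ → Z₁ ∪ Z₂ ∈ F →
    Z₁ ∈ F ∨ Z₂ ∈ F

def HasCIP (F : Set (Set X)) : Prop :=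
  ∀ s : ℕ → Set X, (∀ n, s n ∈ F) → (⋂ n, s n).Nonempty

def IsFixedFamily (F : Set (Set X)) : Prop := (⋂₀ F).Nonempty

def IsRealcompact (Y : Type*) [TopologicalSpace Y] : Prop :=
  ∀ F : Set (Set Y), IsZUltrafilter F → HasCIP F → IsFixedFamily F

def CompletelySeparated [TopologicalSpace X] (A B : Set X) : Prop :=
  ∃ f : X → ℝ, Continuous f ∧ (∀ x ∈ A, f x = 0) ∧ (∀ x ∈ B, f x = 1)

def IsHard [TopologicalSpace X] (H : Set X) : Prop :=
  IsClosed H ∧ ∃ K : Set X, IsCompact K ∧ ∀ V : Set X, IsOpen V → K ⊆ V →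
    ∃ P : Set X, IsRealcompact ↥P ∧ CompletelySeparated (H \ V) Pᶜ

def IsPseudocompact (Y : Type*) [TopologicalSpace Y] : Prop :=
  ∀ f : Y → ℝ, Continuous f → ∃ M : ℝ, ∀ y, |f y| ≤ M

def NearlyPseudocompact (Y : Type*) [TopologicalSpace Y] : Prop :=
  ∃ X₁ X₂ : Set Y, X₁ ∪ X₂ = Set.univ ∧
    X₁ = closure (interior X₁) ∧
    X₁ = closure {y : Y | ∃ K : Set Y, IsCompact K ∧ K ∈ nhds y} ∧
    IsPseudocompact ↥X₁ ∧
    X₂ = closure (interior X₂) ∧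
    (∀ y ∈ X₂, ¬ ∃ N ∈ nhds y, IsRealcompact ↥N) ∧
    interior (X₁ ∩ X₂) = (∅ : Set Y)

def IsHZFilter [TopologicalSpace X] (F : Set (Set X)) : Prop :=
  IsZFilter F ∧ ∀ Z ∈ F, ∃ H ∈ F, IsHard H ∧ H ⊆ Z

def IsHZUltrafilter [TopologicalSpace X] (F : Set (Set X)) : Prop :=
  IsZUltrafilter F ∧ ∃ H ∈ F, IsHard H

def deltaX (X : Type*) [TopologicalSpace X] : Type _ :=
  {F : Set (Set X) // IsZUltrafilter F ∧ (IsFixedFamily F ∨ ∃ H ∈ F, IsHard H)}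

def deltaCl [TopologicalSpace X] (Z : Set X) : Set (deltaX X) :=
  {p | Z ∈ p.1}

instance [TopologicalSpace X] : TopologicalSpace (deltaX X) :=
  TopologicalSpace.generateFrom {U | ∃ Z : Set X, IsZeroSet Z ∧ U = (deltaCl Z)ᶜ}

def pointUltra [TopologicalSpace X] (x : X) : Set (Set X) :=
  {Z | IsZeroSet Z ∧ x ∈ Z}
lemma isZeroSet_closed [TopologicalSpace X] {Z : Set X} (h : IsZeroSet Z) : IsClosed Z := by
  obtain ⟨f, hf, rfl⟩ := h
  exact isClosed_eq hf continuous_const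

lemma isZeroSet_univ [TopologicalSpace X] : IsZeroSet (Set.univ : Set X) :=
  ⟨fun _ => 0, continuous_const, by simp⟩

lemma isZeroSet_inter [TopologicalSpace X] {Z₁ Z₂ : Set X} (h1 : IsZeroSet Z₁)
    (h2 : IsZeroSet Z₂) : IsZeroSet (Z₁ ∩ Z₂) := by
  obtain ⟨f, hf, rfl⟩ := h1
  obtain ⟨g, hg, rfl⟩ := h2
  refine ⟨fun x => |f x| + |g x|, by continuity, ?_⟩
  ext x
  simp only [Set.mem_inter_iff, Set.mem_setOf_eq]
  rw [← abs_eq_zero (a := f x), ← abs_eq_zero (a := g x)]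
  exact (add_eq_zero_iff_of_nonneg (abs_nonneg (f x)) (abs_nonneg (g x))).symm

lemma isHard_mono [TopologicalSpace X] {H H' : Set X} (h : IsHard H) (hc : IsClosed H')
    (hs : H' ⊆ H) : IsHard H' := by
  obtain ⟨_, K, hK, hV⟩ := h
  refine ⟨hc, K, hK, fun V hVo hKV => ?_⟩
  obtain ⟨P, hP, f, hf, h0, h1⟩ := hV V hVo hKV
  exact ⟨P, hP, f, hf, fun x hx => h0 x ⟨hs hx.1, hx.2⟩, h1⟩

lemma isHard_empty [TopologicalSpace X] : IsHard (∅ : Set X) := by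
  refine ⟨isClosed_empty, ∅, isCompact_empty, fun V _ _ => ?_⟩
  refine ⟨∅, ?_, fun _ => 1, continuous_const, by simp, fun _ _ => rfl⟩
  intro F hF _
  exfalso
  have hne : (Set.univ : Set ↥(∅ : Set X)) = ∅ := Set.univ_eq_empty_iff.2 inferInstance
  exact hF.1.2.1 (hne ▸ hF.1.2.2.1)

/-- a zero set is hard iff it is not a member of any z-filter that is
not an hz-filter. -/
theorem stmt16 [TopologicalSpace X] [T35Space X] (Z : Set X) (hZ : IsZeroSet Z) :
    IsHard Z ↔ ¬ ∃ F : Set (Set X), IsZFilter F ∧ ¬ IsHZFilter F ∧ Z ∈ F := by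
  constructor
  · rintro hHard ⟨F, hF, hnHZ, hZF⟩
    apply hnHZ
    refine ⟨hF, fun Z' hZ' => ?_⟩
    have hmem : Z ∩ Z' ∈ F := hF.2.2.2.1 Z hZF Z' hZ'
    refine ⟨Z ∩ Z', hmem, ?_, Set.inter_subset_right⟩
    exact isHard_mono hHard (isZeroSet_closed (hF.1 _ hmem)) Set.inter_subset_left
  · intro hno
    by_contra hnotHard
    have hne : Z.Nonempty := by
      rcases Set.eq_empty_or_nonempty Z with rfl | h
      · exact (hnotHard isHard_empty).elim
      · exact h
    set F : Set (Set X) := {Z' | IsZeroSet Z' ∧ Z ⊆ Z'} with hFdef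
    have hZFilter : IsZFilter F := by
      refine ⟨fun Z' h => h.1, ?_, ⟨isZeroSet_univ, Set.subset_univ _⟩, ?_, ?_⟩
      · rintro ⟨-, hsub⟩
        exact hne.ne_empty (Set.subset_empty_iff.1 hsub)
      · rintro Z₁ ⟨h1, s1⟩ Z₂ ⟨h2, s2⟩
        exact ⟨isZeroSet_inter h1 h2, Set.subset_inter s1 s2⟩
      · rintro Z₁ ⟨-, s1⟩ Z₂ h2 hsub
        exact ⟨h2, s1.trans hsub⟩
    apply hno
    refine ⟨F, hZFilter, ?_, hZ, Set.Subset.rfl⟩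
    rintro ⟨-, hhz⟩
    obtain ⟨H, ⟨-, hZH⟩, hHhard, hHZ⟩ := hhz Z ⟨hZ, Set.Subset.rfl⟩
    exact hnotHard (Set.Subset.antisymm hHZ hZH ▸ hHhard)
end

section
/- Every point p of δX \ X has a compact neighbourhood in δX. -/
open Set Topology

variable {X : Type*}

section AuxLemmas

variable [TopologicalSpace X]

lemma zs_univ : IsZeroSet (Set.univ : Set X) :=
  ⟨fun _ => 0, continuous_const, by simp⟩

lemma zs_closed {Z : Set X} (h : IsZeroSet Z) : IsClosed Z := by
  obtain ⟨f, hf, rfl⟩ := h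
  exact isClosed_eq hf continuous_const

lemma zs_inter {Z₁ Z₂ : Set X} (h₁ : IsZeroSet Z₁) (h₂ : IsZeroSet Z₂) :
    IsZeroSet (Z₁ ∩ Z₂) := by
  obtain ⟨f, hf, rfl⟩ := h₁
  obtain ⟨g, hg, rfl⟩ := h₂
  refine ⟨fun x => |f x| + |g x|, hf.abs.add hg.abs, ?_⟩
  ext x
  constructor
  · rintro ⟨h1, h2⟩
    have e1 : f x = 0 := h1
    have e2 : g x = 0 := h2
    show |f x| + |g x| = 0
    simp [e1, e2]
  · intro h
    have h' : |f x| + |g x| = 0 := h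
    have := (add_eq_zero_iff_of_nonneg (abs_nonneg (f x)) (abs_nonneg (g x))).1 h'
    exact ⟨abs_eq_zero.1 this.1, abs_eq_zero.1 this.2⟩

lemma zs_le {g : X → ℝ} (hg : Continuous g) (c : ℝ) : IsZeroSet {x | g x ≤ c} := by
  refine ⟨fun x => max (g x - c) 0, (hg.sub continuous_const).max continuous_const, ?_⟩
  ext x
  simp [Set.mem_setOf_eq, max_eq_right_iff, sub_nonpos]

lemma zs_ge {g : X → ℝ} (hg : Continuous g) (c : ℝ) : IsZeroSet {x | c ≤ g x} := by
  refine ⟨fun x => max (c - g x) 0, (continuous_const.sub hg).max continuous_const, ?_⟩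
  ext x
  simp [Set.mem_setOf_eq, max_eq_right_iff, sub_nonpos]

lemma zf_biInter {F : Set (Set X)} (hF : IsZFilter F) {ι : Type*} (t : Finset ι)
    (s : ι → Set X) (h : ∀ i ∈ t, s i ∈ F) : (⋂ i ∈ t, s i) ∈ F := by
  classical
  revert h
  induction t using Finset.induction_on with
  | empty => intro _; simpa using hF.2.2.1
  | insert _ _ ha ih =>
      intro h
      rw [Finset.set_biInter_insert]
      exact hF.2.2.2.1 _ (h _ (Finset.mem_insert_self _ _)) _
        (ih fun i hi => h i (Finset.mem_insert_of_mem hi))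

lemma zu_mem_of_meets {F : Set (Set X)} (hF : IsZUltrafilter F) {Z : Set X}
    (hZ : IsZeroSet Z) (h : ∀ W ∈ F, (W ∩ Z).Nonempty) : Z ∈ F := by
  set G : Set (Set X) := {V | IsZeroSet V ∧ ∃ W ∈ F, W ∩ Z ⊆ V} with hGdef
  have hGf : IsZFilter G := by
    refine ⟨fun V hV => hV.1, ?_, ⟨zs_univ, Set.univ, hF.1.2.2.1, Set.subset_univ _⟩, ?_, ?_⟩
    · rintro ⟨-, W, hW, hsub⟩
      obtain ⟨x, hx⟩ := h W hW
      exact absurd (hsub hx) (Set.notMem_empty x)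
    · rintro V₁ ⟨hz₁, W₁, hW₁, hs₁⟩ V₂ ⟨hz₂, W₂, hW₂, hs₂⟩
      exact ⟨zs_inter hz₁ hz₂, W₁ ∩ W₂, hF.1.2.2.2.1 _ hW₁ _ hW₂,
        fun x hx => ⟨hs₁ ⟨hx.1.1, hx.2⟩, hs₂ ⟨hx.1.2, hx.2⟩⟩⟩
    · rintro V₁ ⟨hz₁, W₁, hW₁, hs₁⟩ V₂ hz₂ hsub
      exact ⟨hz₂, W₁, hW₁, hs₁.trans hsub⟩
  have hFG : F ⊆ G := fun V hV => ⟨hF.1.1 V hV, V, hV, Set.inter_subset_left⟩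
  have hGF : G = F := hF.2 G hGf hFG
  rw [← hGF]
  exact ⟨hZ, Set.univ, hF.1.2.2.1, fun x hx => hx.2⟩

lemma zu_exists_disjoint {F : Set (Set X)} (hF : IsZUltrafilter F) {Z : Set X}
    (hZ : IsZeroSet Z) (h : Z ∉ F) : ∃ W ∈ F, W ∩ Z = ∅ := by
  by_contra hc
  push_neg at hc
  exact h (zu_mem_of_meets hF hZ fun W hW => hc W hW)

lemma exists_zu {G : Set (Set X)} (hG : IsZFilter G) :
    ∃ U, G ⊆ U ∧ IsZUltrafilter U := by
  have hub : ∀ c ⊆ {F : Set (Set X) | IsZFilter F}, IsChain (· ⊆ ·) c → c.Nonempty →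
      ∃ ub ∈ {F : Set (Set X) | IsZFilter F}, ∀ s ∈ c, s ⊆ ub := by
    intro c hcS hchain hcne
    refine ⟨⋃₀ c, ⟨?_, ?_, ?_, ?_, ?_⟩, fun s hs => Set.subset_sUnion_of_mem hs⟩
    · rintro Z ⟨F, hFc, hZF⟩; exact (hcS hFc).1 Z hZF
    · rintro ⟨F, hFc, hF⟩; exact (hcS hFc).2.1 hF
    · obtain ⟨F, hFc⟩ := hcne; exact ⟨F, hFc, (hcS hFc).2.2.1⟩
    · rintro Z₁ ⟨F₁, hF₁, hZ₁⟩ Z₂ ⟨F₂, hF₂, hZ₂⟩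
      rcases hchain.total hF₁ hF₂ with hle | hle
      · exact ⟨F₂, hF₂, (hcS hF₂).2.2.2.1 _ (hle hZ₁) _ hZ₂⟩
      · exact ⟨F₁, hF₁, (hcS hF₁).2.2.2.1 _ hZ₁ _ (hle hZ₂)⟩
    · rintro Z₁ ⟨F₁, hF₁, hZ₁⟩ Z₂ hz₂ hsub
      exact ⟨F₁, hF₁, (hcS hF₁).2.2.2.2 _ hZ₁ _ hz₂ hsub⟩
  obtain ⟨U, hGU, hUmax⟩ := zorn_subset_nonempty {F : Set (Set X) | IsZFilter F} hub G hG
  exact ⟨U, hGU, hUmax.1, fun G' hG' hsub =>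
    Set.Subset.antisymm (hUmax.2 hG' hsub) hsub⟩

lemma compact_deltaCl {W : Set X} (hWz : IsZeroSet W) (hWh : IsHard W) :
    IsCompact (deltaCl W) := by
  intro f hf hle
  have hUf : ↑(Ultrafilter.of f) ≤ f := Ultrafilter.of_le f
  set U : Ultrafilter (deltaX X) := Ultrafilter.of f with hUdef
  have hWU : deltaCl W ∈ U := hUf (hle (Filter.mem_principal_self _))
  set G : Set (Set X) := {Z | IsZeroSet Z ∧ deltaCl Z ∈ U} with hGdef
  have hGf : IsZFilter G := by
    refine ⟨fun Z hZ => hZ.1, ?_, ⟨zs_univ, ?_⟩, ?_, ?_⟩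
    · rintro ⟨-, hmem⟩
      have hem : deltaCl (∅ : Set X) = ∅ :=
        Set.eq_empty_of_forall_notMem fun F hF => F.2.1.1.2.1 hF
      rw [hem] at hmem
      exact Ultrafilter.empty_notMem hmem
    · have huniv : deltaCl (Set.univ : Set X) = Set.univ :=
        Set.eq_univ_of_forall fun F => F.2.1.1.2.2.1
      rw [huniv]; exact Filter.univ_mem
    · rintro Z₁ ⟨hz₁, hm₁⟩ Z₂ ⟨hz₂, hm₂⟩
      exact ⟨zs_inter hz₁ hz₂, Filter.mem_of_superset (Filter.inter_mem hm₁ hm₂)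
        fun F hF => F.2.1.1.2.2.2.1 _ hF.1 _ hF.2⟩
    · rintro Z₁ ⟨hz₁, hm₁⟩ Z₂ hz₂ hsub
      exact ⟨hz₂, Filter.mem_of_superset hm₁
        fun F hF => F.2.1.1.2.2.2.2 _ hF _ hz₂ hsub⟩
  obtain ⟨Uz, hGU, hUz⟩ := exists_zu hGf
  have hWUz : W ∈ Uz := hGU ⟨hWz, hWU⟩
  set q : deltaX X := ⟨Uz, hUz, Or.inr ⟨W, hWUz, hWh⟩⟩ with hqdef
  refine ⟨q, hWUz, ?_⟩
  have hqU : ClusterPt q ↑U := by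
    rw [Ultrafilter.clusterPt_iff]
    rw [le_nhds_iff]
    intro s hqs hs
    have hgen : TopologicalSpace.GenerateOpen
        {V | ∃ Z : Set X, IsZeroSet Z ∧ V = (deltaCl Z)ᶜ} s := hs
    clear hs
    revert hqs
    induction hgen with
    | basic V hV =>
        obtain ⟨Z, hZz, rfl⟩ := hV
        intro hqs
        refine Ultrafilter.compl_mem_iff_notMem.2 fun hmem => hqs (hGU ⟨hZz, hmem⟩)
    | univ => exact fun _ => Filter.univ_mem
    | inter s t _ _ ihs iht => exact fun hq => Filter.inter_mem (ihs hq.1) (iht hq.2)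
    | sUnion S _ ih =>
        rintro ⟨s, hsS, hqs'⟩
        exact Filter.mem_of_superset (ih s hsS hqs') (Set.subset_sUnion_of_mem hsS)
  exact hqU.mono hUf

end AuxLemmas

/-- every point of δX \ X (i.e. every free hz-ultrafilter) has a
compact neighbourhood in δX. -/
theorem stmt18 [TopologicalSpace X] [T35Space X] (p : deltaX X)
    (hp : ¬ IsFixedFamily p.1) :
    ∃ K : Set (deltaX X), IsCompact K ∧ K ∈ nhds p := by
  obtain ⟨hpu, hfix⟩ := p.2
  obtain ⟨H, hHp, hHcl, K, hKc, hKprop⟩ := hfix.resolve_left hp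
  have hfree : ∀ x : X, ∃ Z ∈ p.1, x ∉ Z := by
    intro x
    by_contra hc
    push_neg at hc
    exact hp ⟨x, Set.mem_sInter.2 fun Z hZ => hc Z hZ⟩
  have key : ∀ x : X, ∃ (U : Set X) (Z' : Set X),
      IsOpen U ∧ x ∈ U ∧ Z' ∈ p.1 ∧ U ∩ Z' = ∅ := by
    intro x
    obtain ⟨Z, hZp, hxZ⟩ := hfree x
    have hZcl : IsClosed Z := zs_closed (hpu.1.1 Z hZp)
    obtain ⟨f, hfc, hfx, hfZ⟩ := CompletelyRegularSpace.completely_regular x Z hZcl hxZ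
    set g : X → ℝ := fun y => (f y : ℝ) with hgdef
    have hgc : Continuous g := continuous_subtype_val.comp hfc
    refine ⟨{y | g y < 1/2}, {y | 1/2 ≤ g y}, isOpen_lt hgc continuous_const, ?_, ?_, ?_⟩
    · show g x < 1/2
      have : g x = 0 := by rw [hgdef]; simp [hfx]
      rw [this]; norm_num
    · refine hpu.1.2.2.2.2 Z hZp _ (zs_ge hgc _) fun y hy => ?_
      show (1:ℝ)/2 ≤ g y
      have : g y = 1 := by rw [hgdef]; simp [hfZ hy]
      rw [this]; norm_num
    · apply Set.eq_empty_of_forall_notMem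
      rintro y ⟨h1, h2⟩
      have h1' : g y < 1/2 := h1
      have h2' : (1:ℝ)/2 ≤ g y := h2
      linarith
  choose Uf Zf hUo hxU hZp' hdisj using key
  obtain ⟨t, ht⟩ := hKc.elim_finite_subcover (fun x : ↥K => Uf ↑x)
    (fun x => hUo _) (fun y hy => Set.mem_iUnion.2 ⟨⟨y, hy⟩, hxU y⟩)
  set V₀ : Set X := ⋃ x ∈ t, Uf ↑x with hV₀def
  have hV₀o : IsOpen V₀ := isOpen_biUnion fun i _ => hUo _
  set Z₀ : Set X := ⋂ x ∈ t, Zf ↑x with hZ₀def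
  have hZ₀p : Z₀ ∈ p.1 := zf_biInter hpu.1 t _ fun i _ => hZp' _
  have hZ₀V₀ : Z₀ ∩ V₀ = ∅ := by
    apply Set.eq_empty_of_forall_notMem
    rintro y ⟨hyZ, hyV⟩
    obtain ⟨i, hit, hyU⟩ := Set.mem_iUnion₂.1 hyV
    have hyZi : y ∈ Zf ↑i := Set.mem_iInter₂.1 hyZ i hit
    have : y ∈ Uf ↑i ∩ Zf ↑i := ⟨hyU, hyZi⟩
    rw [hdisj] at this
    exact this
  obtain ⟨P, hPrc, g, hgc, hg0, hg1⟩ := hKprop V₀ hV₀o ht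
  have hWz : IsZeroSet {x | g x ≤ 1/2} := zs_le hgc _
  set W : Set X := {x | g x ≤ 1/2} with hWdef
  have hWh : IsHard W := by
    refine ⟨zs_closed hWz, ∅, isCompact_empty, fun V hVo _ =>
      ⟨P, hPrc, fun x => min (max (2 * g x - 1) 0) 1,
        (((continuous_const.mul hgc).sub continuous_const).max continuous_const).min
          continuous_const, ?_, ?_⟩⟩
    · rintro x ⟨hxW, -⟩
      have hx : g x ≤ 1/2 := hxW
      have h1 : 2 * g x - 1 ≤ 0 := by linarith
      show min (max (2 * g x - 1) 0) 1 = 0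
      rw [max_eq_right h1]
      norm_num
    · intro x hx
      have hg1x : g x = 1 := hg1 x hx
      show min (max (2 * g x - 1) 0) 1 = 1
      rw [hg1x]
      norm_num
  have hZz : IsZeroSet {x | 1/2 ≤ g x} := zs_ge hgc _
  set Z : Set X := {x | 1/2 ≤ g x} with hZdef
  have hZnp : Z ∉ p.1 := by
    intro hZp
    have hmem : Z ∩ (H ∩ Z₀) ∈ p.1 :=
      hpu.1.2.2.2.1 _ hZp _ (hpu.1.2.2.2.1 _ hHp _ hZ₀p)
    have hemp : Z ∩ (H ∩ Z₀) = ∅ := by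
      apply Set.eq_empty_of_forall_notMem
      rintro x ⟨hxZ, hxH, hxZ₀⟩
      have hxV : x ∉ V₀ := fun hv => by
        have : x ∈ Z₀ ∩ V₀ := ⟨hxZ₀, hv⟩
        rw [hZ₀V₀] at this
        exact this
      have hx0 : g x = 0 := hg0 x ⟨hxH, hxV⟩
      have hx2 : (1:ℝ)/2 ≤ g x := hxZ
      rw [hx0] at hx2
      norm_num at hx2
    rw [hemp] at hmem
    exact hpu.1.2.1 hmem
  refine ⟨deltaCl W, compact_deltaCl hWz hWh, ?_⟩
  rw [mem_nhds_iff]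
  refine ⟨(deltaCl Z)ᶜ, ?_, ?_, hZnp⟩
  · intro F hF
    obtain ⟨W', hW'F, hW'Z⟩ := zu_exists_disjoint F.2.1 hZz hF
    have hsub : W' ⊆ W := by
      intro x hx
      show g x ≤ 1/2
      by_contra hxW
      have hxZ : x ∈ Z := le_of_lt (not_le.1 hxW)
      have : x ∈ W' ∩ Z := ⟨hx, hxZ⟩
      rw [hW'Z] at this
      exact this
    exact F.2.1.1.2.2.2.2 W' hW'F W hWz hsub
  · exact TopologicalSpace.GenerateOpen.basic _ ⟨Z, hZz, rfl⟩
end
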